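/- Let l be one of the logics K, D, T, K4, KD4, S4, K+5, D+5, T+5, K4+5, KD4+5, S4+5. A modal formula φ is complete for l if and only if for every two finite pointed models (M,a) and (M',a') for l with M,a ⊨ φ and M',a' ⊨ φ, it holds that (M,a) ∼_{P(φ)} (M',a'). -/

import Mathlib

/-- Modal formulas in negation normal form, as in the paper:
φ ::= ⊥ | ⊤ | p | ¬p | φ∧φ | φ∨φ | □φ | ◇φ. -/
inductive Form : Type where
  | bot : Form
  | top : Form
  | pos : ℕ → Form
  | npos : ℕ → Form
  | and : Form → Form → Form
  | or : Form → Form → Form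
  | box : Form → Form
  | dia : Form → Form
deriving DecidableEq

namespace Form

/-- Negation, defined as usual (by De Morgan dualities). -/
def neg : Form → Form
  | bot => top
  | top => bot
  | pos p => npos p
  | npos p => pos p
  | and φ ψ => or φ.neg ψ.neg
  | or φ ψ => and φ.neg ψ.neg
  | box φ => dia φ.neg
  | dia φ => box φ.neg

/-- Implication φ → ψ, defined as usual. -/
def imp (φ ψ : Form) : Form := or φ.neg ψ

/-- Bi-implication φ ↔ ψ, defined as usual. -/
def biimp (φ ψ : Form) : Form := and (imp φ ψ) (imp ψ φ)

/-- P(φ): the set of propositional variables occurring in φ. -/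
def vars : Form → Finset ℕ
  | bot => ∅
  | top => ∅
  | pos p => {p}
  | npos p => {p}
  | and φ ψ => φ.vars ∪ ψ.vars
  | or φ ψ => φ.vars ∪ ψ.vars
  | box φ => φ.vars
  | dia φ => φ.vars

/-- Modal depth. -/
def md : Form → ℕ
  | bot => 0
  | top => 0
  | pos _ => 0
  | npos _ => 0
  | and φ ψ => max φ.md ψ.md
  | or φ ψ => max φ.md ψ.md
  | box φ => φ.md + 1
  | dia φ => φ.md + 1

/-- sub(φ): the set of subformulas of φ. -/
def subf : Form → Finset Form
  | bot => {bot}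
  | top => {top}
  | pos p => {pos p}
  | npos p => {npos p}
  | and φ ψ => insert (and φ ψ) (φ.subf ∪ ψ.subf)
  | or φ ψ => insert (or φ ψ) (φ.subf ∪ ψ.subf)
  | box φ => insert (box φ) φ.subf
  | dia φ => insert (dia φ) φ.subf

/-- s̄ub(φ) = sub(φ) ∪ {¬ψ : ψ ∈ sub(φ)}. -/
def subBar (φ : Form) : Finset Form := φ.subf ∪ φ.subf.image neg

/-- □^k φ : k nested boxes. -/
def boxIter : ℕ → Form → Form
  | 0, φ => φ
  | n + 1, φ => box (boxIter n φ)

def isDia : Form → Bool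
  | dia _ => true
  | _ => false

def isBox : Form → Bool
  | box _ => true
  | _ => false

end Form

/-- Big conjunction over a finite set of formulas (⋀∅ = ⊤). -/
noncomputable def bigAnd (s : Finset Form) : Form := s.toList.foldr Form.and Form.top

/-- Big disjunction over a finite set of formulas (⋁∅ = ⊥). -/
noncomputable def bigOr (s : Finset Form) : Form := s.toList.foldr Form.or Form.bot

/-- th(a) = ⋀ a. -/
noncomputable def th (a : Finset Form) : Form := bigAnd a

/-- A finite Kripke model: a nonempty finite set of states, an accessibility
relation and a valuation. -/
structure Model : Type 1 where
  W : Type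
  nonempty : Nonempty W
  finite : Finite W
  R : W → W → Prop
  V : W → Set ℕ

/-- Satisfaction M,w ⊨ φ. -/
def Model.sat (M : Model) : M.W → Form → Prop
  | _, .bot => False
  | _, .top => True
  | w, .pos p => p ∈ M.V w
  | w, .npos p => p ∉ M.V w
  | w, .and φ ψ => M.sat w φ ∧ M.sat w ψ
  | w, .or φ ψ => M.sat w φ ∨ M.sat w ψ
  | w, .box φ => ∀ v, M.R w v → M.sat v φ
  | w, .dia φ => ∃ v, M.R w v ∧ M.sat v φ

/-- The six base logics K, D, T, K4, KD4, S4. -/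
inductive BaseLogic : Type where
  | K | D | T | K4 | KD4 | S4
deriving DecidableEq

/-- A logic: a base logic, possibly extended by axiom 5. -/
structure Logic : Type where
  base : BaseLogic
  has5 : Bool
deriving DecidableEq

def Logic.K : Logic := ⟨.K, false⟩
def Logic.D : Logic := ⟨.D, false⟩
def Logic.T : Logic := ⟨.T, false⟩
def Logic.K4 : Logic := ⟨.K4, false⟩
def Logic.KD4 : Logic := ⟨.KD4, false⟩
def Logic.S4 : Logic := ⟨.S4, false⟩

/-- l + 5. -/
def BaseLogic.plus5 (b : BaseLogic) : Logic := ⟨b, true⟩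

/-- M is a model for the logic l (frame conditions). -/
def Model.IsFor (M : Model) (l : Logic) : Prop :=
  (match l.base with
    | .K => True
    | .D => ∀ w, ∃ v, M.R w v
    | .T => ∀ w, M.R w w
    | .K4 => ∀ a b c, M.R a b → M.R b c → M.R a c
    | .KD4 => (∀ w, ∃ v, M.R w v) ∧ (∀ a b c, M.R a b → M.R b c → M.R a c)
    | .S4 => (∀ w, M.R w w) ∧ (∀ a b c, M.R a b → M.R b c → M.R a c))
  ∧ (l.has5 = true → ∀ a b c, M.R a b → M.R a c → M.R b c)

/-- φ is satisfiable for l: satisfied at some state of some finite model for l. -/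
def Satisfiable (l : Logic) (φ : Form) : Prop :=
  ∃ M : Model, M.IsFor l ∧ ∃ w : M.W, M.sat w φ

/-- φ is valid for l: satisfied at every state of every finite model for l. -/
def Valid (l : Logic) (φ : Form) : Prop :=
  ∀ M : Model, M.IsFor l → ∀ w : M.W, M.sat w φ

/-- φ is complete for l: for every ψ ∈ L(P(φ)), φ→ψ or φ→¬ψ is valid for l. -/
def Complete (l : Logic) (φ : Form) : Prop :=
  ∀ ψ : Form, ψ.vars ⊆ φ.vars → (Valid l (φ.imp ψ) ∨ Valid l (φ.imp ψ.neg))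

/-- Z is a bisimulation modulo P from M to M'. -/
def IsBisim (P : Set ℕ) (M M' : Model) (Z : M.W → M'.W → Prop) : Prop :=
  (∃ s s', Z s s') ∧
  ∀ s s', Z s s' →
    (M.V s ∩ P = M'.V s' ∩ P) ∧
    (∀ t, M.R s t → ∃ t', M'.R s' t' ∧ Z t t') ∧
    (∀ t', M'.R s' t' → ∃ t, M.R s t ∧ Z t t')

/-- (M,a) ∼_P (M',a'). -/
def Bisimilar (P : Set ℕ) (M : Model) (a : M.W) (M' : Model) (a' : M'.W) : Prop :=
  ∃ Z, IsBisim P M M' Z ∧ Z a a'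

/-- (M,a) ≡_P (M',a'): the two pointed models satisfy the same formulas of L(P). -/
def EquivP (P : Set ℕ) (M : Model) (a : M.W) (M' : Model) (a' : M'.W) : Prop :=
  ∀ φ : Form, ↑φ.vars ⊆ P → (M.sat a φ ↔ M'.sat a' φ)

/-- (M,s) is flat (for base logic l, with axiom 5): the carrier is {s}∪W and
R = R1 ∪ R2 with R1 ⊆ {s}×W, R2 an equivalence relation on W, and s ∈ W if
l ∈ {T,S4}. -/
def Flat (l : BaseLogic) (M : Model) (s : M.W) : Prop :=
  ∃ W : Set M.W, (∀ w, w = s ∨ w ∈ W) ∧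
    ∃ R1 R2 : M.W → M.W → Prop,
      (∀ x y, M.R x y ↔ (R1 x y ∨ R2 x y)) ∧
      (∀ x y, R1 x y → x = s ∧ y ∈ W) ∧
      (∀ x y, R2 x y → x ∈ W ∧ y ∈ W) ∧
      (∀ x ∈ W, R2 x x) ∧
      (∀ x y, R2 x y → R2 y x) ∧
      (∀ x y z, R2 x y → R2 y z → R2 x z) ∧
      ((l = .T ∨ l = .S4) → s ∈ W)

/-- A maximal state for l with respect to φ: a maximally l-consistent subset
of s̄ub(φ). -/
def MaxState (l : Logic) (φ : Form) (a : Finset Form) : Prop :=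
  a ⊆ φ.subBar ∧ Satisfiable l (th a) ∧ ∀ ψ ∈ φ.subf, ψ ∈ a ∨ ψ.neg ∈ a

/-- D(x) = {◇ψ : ◇ψ ∈ x}. -/
def DSet (x : Finset Form) : Finset Form := x.filter (fun ψ => ψ.isDia = true)

/-- B(x) = {□ψ : □ψ ∈ x}. -/
def BSet (x : Finset Form) : Finset Form := x.filter (fun ψ => ψ.isBox = true)

/-- A view: a parent-state and a finite set of children-states. -/
structure View : Type where
  parent : Finset Form
  children : Finset (Finset Form)

/-- The view is with respect to φ: all its states are subsets of s̄ub(φ). -/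
def View.WF (φ : Form) (S : View) : Prop :=
  S.parent ⊆ φ.subBar ∧ ∀ c ∈ S.children, c ⊆ φ.subBar

/-- A set of formulas is l-closed. -/
def LClosed (l : Logic) (P : Finset ℕ) (s : Finset Form) : Prop :=
  (∀ φ1 φ2 : Form, Form.and φ1 φ2 ∈ s → φ1 ∈ s ∧ φ2 ∈ s) ∧
  (∀ φ1 φ2 : Form, Form.or φ1 φ2 ∈ s → φ1 ∈ s ∨ φ2 ∈ s) ∧
  ((l.base = .T ∨ l.base = .S4) → ∀ ψ : Form, Form.box ψ ∈ s → ψ ∈ s) ∧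
  (∀ p ∈ P, Form.pos p ∈ s ∨ Form.npos p ∈ s)

/-- The view S is l-complete. -/
def ViewLComplete (l : Logic) (P : Finset ℕ) (S : View) : Prop :=
  LClosed l P S.parent ∧
  (∀ c ∈ S.children, LClosed l P c) ∧
  (∀ ψ : Form, Form.dia ψ ∈ S.parent → ∃ c ∈ S.children, ψ ∈ c) ∧
  (∀ ψ : Form, Form.box ψ ∈ S.parent → ∀ c ∈ S.children, ψ ∈ c) ∧
  ((l.base = .K4 ∨ l.base = .KD4 ∨ l.base = .S4) →
    ∀ ψ : Form, Form.box ψ ∈ S.parent → ∀ c ∈ S.children, Form.box ψ ∈ c) ∧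
  (l.base = .KD4 → S.children.Nonempty)

/-- The view S is consistent for l: every one of its states is consistent. -/
def ViewConsistent (l : Logic) (S : View) : Prop :=
  Satisfiable l (th S.parent) ∧ ∀ c ∈ S.children, Satisfiable l (th c)

/-- d = max{md(th(c')) : c' ∈ C(S)}. -/
noncomputable def childDepth (S : View) : ℕ := S.children.sup (fun c => (th c).md)

/-- A K-maximal child-state: a maximally K-consistent subset of s̄ub_d(φ). -/
def KMaxChild (φ : Form) (d : ℕ) (c : Finset Form) : Prop :=
  c ⊆ φ.subBar.filter (fun ψ => ψ.md ≤ d) ∧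
  Satisfiable Logic.K (th c) ∧
  ∀ ψ ∈ φ.subf, ψ.md ≤ d → (ψ ∈ c ∨ ψ.neg ∈ c)

/-- S' completes S (for logic l, with respect to φ). -/
def ViewCompletes (l : Logic) (φ : Form) (S' S : View) : Prop :=
  ViewLComplete l φ.vars S' ∧
  S.parent ⊆ S'.parent ∧
  (∀ a ∈ S.children, ∃ a' ∈ S'.children, a ⊆ a') ∧
  (l.base = .K → ∀ a' ∈ S'.children, KMaxChild φ (childDepth S') a') ∧
  (l.base ≠ .K → ∀ a' ∈ S'.children, MaxState l φ a')

/-- The depth-0 normal form ⋀_{p∈S} p ∧ ⋀_{p∈P∖S} ¬p. -/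
noncomputable def nf0 (P S : Finset ℕ) : Form :=
  Form.and (bigAnd (S.image Form.pos)) (bigAnd ((P \ S).image Form.npos))

/-- Fine's normal forms F_P^d. -/
noncomputable def NF (P : Finset ℕ) : ℕ → Set Form
  | 0 => { χ | ∃ S ⊆ P, χ = nf0 P S }
  | d + 1 => { χ | ∃ S : Finset Form, ↑S ⊆ NF P d ∧ ∃ S0 ⊆ P,
      χ = Form.and (nf0 P S0)
            (Form.and (bigAnd (S.image Form.dia)) (Form.box (bigOr S))) }

/-- φ is complete up to its depth for l. -/
def CompleteUpToDepth (l : Logic) (φ : Form) : Prop :=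
  ∀ ψ : Form, ψ.vars ⊆ φ.vars → ψ.md ≤ φ.md →
    (Valid l (φ.imp ψ) ∨ Valid l (φ.imp ψ.neg))

/-!
A complete formula fixes the truth value of every formula over its variables, so any two of its
finite models are modally equivalent over `P(φ)`; on finite (indeed image-finite) models modal
equivalence is a bisimulation (Hennessy–Milner). Conversely, bisimilar states satisfy the same
formulas over `P(φ)`, so two models of `φ` disagreeing on some `ψ` cannot be bisimilar.
-/

@[simp]
lemma Form.vars_neg (φ : Form) : φ.neg.vars = φ.vars := by
  induction φ <;> simp [Form.neg, Form.vars, *]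

namespace Model

variable (M : Model)

@[simp]
lemma sat_neg (φ : Form) (w : M.W) : M.sat w φ.neg ↔ ¬ M.sat w φ := by
  induction φ generalizing w <;> simp [Form.neg, Model.sat, *, imp_iff_not_or]

@[simp]
lemma sat_imp (φ ψ : Form) (w : M.W) : M.sat w (φ.imp ψ) ↔ (M.sat w φ → M.sat w ψ) := by
  simp [Form.imp, Model.sat, imp_iff_not_or]

lemma sat_bigAnd (s : Finset Form) (w : M.W) : M.sat w (bigAnd s) ↔ ∀ ψ ∈ s, M.sat w ψ := by
  rw [bigAnd, ← forall_congr' fun ψ => imp_congr_left (Finset.mem_toList (s := s))]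
  generalize s.toList = L
  induction L with
  | nil => simp [Model.sat]
  | cons χ L ih => simp [Model.sat, ih]

end Model

lemma vars_bigAnd_subset {P : Set ℕ} {s : Finset Form} (h : ∀ ψ ∈ s, ↑ψ.vars ⊆ P) :
    ↑(bigAnd s).vars ⊆ P := by
  rw [bigAnd]
  replace h : ∀ ψ ∈ s.toList, ↑ψ.vars ⊆ P := fun ψ hψ => h ψ (Finset.mem_toList.1 hψ)
  generalize s.toList = L at h ⊢
  induction L with
  | nil => simp [Form.vars]
  | cons χ L ih =>
    simp only [List.forall_mem_cons] at h
    simpa [Form.vars, Set.union_subset_iff] using ⟨h.1, ih h.2⟩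

lemma Valid.mp {l : Logic} {φ ψ : Form} (h : Valid l (φ.imp ψ)) {M : Model} (hM : M.IsFor l)
    {w : M.W} (hφ : M.sat w φ) : M.sat w ψ :=
  (M.sat_imp φ ψ w).1 (h M hM w) hφ

lemma IsBisim.sat_iff {P : Set ℕ} {M M' : Model} {Z : M.W → M'.W → Prop}
    (hZ : IsBisim P M M' Z) {ψ : Form} (hψ : ↑ψ.vars ⊆ P) {s : M.W} {s' : M'.W}
    (hs : Z s s') : M.sat s ψ ↔ M'.sat s' ψ := by
  induction ψ generalizing s s' with
  | bot | top => simp [Model.sat]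
  | pos p =>
    have hp : p ∈ P := hψ (by simp [Form.vars])
    simpa [Model.sat, hp] using Set.ext_iff.1 (hZ.2 s s' hs).1 p
  | npos p =>
    have hp : p ∈ P := hψ (by simp [Form.vars])
    simpa [Model.sat, hp] using (Set.ext_iff.1 (hZ.2 s s' hs).1 p).not
  | and φ χ ih₁ ih₂ | or φ χ ih₁ ih₂ =>
    simp only [Form.vars, Finset.coe_union, Set.union_subset_iff] at hψ
    simp only [Model.sat, ih₁ hψ.1 hs, ih₂ hψ.2 hs]
  | box φ ih =>
    obtain ⟨-, hforth, hback⟩ := hZ.2 s s' hs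
    refine ⟨fun h t' ht' => ?_, fun h t ht => ?_⟩
    · obtain ⟨t, ht, hZt⟩ := hback t' ht'
      exact (ih hψ hZt).1 (h t ht)
    · obtain ⟨t', ht', hZt⟩ := hforth t ht
      exact (ih hψ hZt).2 (h t' ht')
  | dia φ ih =>
    obtain ⟨-, hforth, hback⟩ := hZ.2 s s' hs
    refine ⟨fun ⟨t, ht, h⟩ => ?_, fun ⟨t', ht', h⟩ => ?_⟩
    · obtain ⟨t', ht', hZt⟩ := hforth t ht
      exact ⟨t', ht', (ih hψ hZt).1 h⟩
    · obtain ⟨t, ht, hZt⟩ := hback t' ht'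
      exact ⟨t, ht, (ih hψ hZt).2 h⟩

lemma Bisimilar.equivP {P : Set ℕ} {M M' : Model} {a : M.W} {a' : M'.W}
    (h : Bisimilar P M a M' a') : EquivP P M a M' a' := by
  obtain ⟨Z, hZ, ha⟩ := h
  exact fun _ hψ => hZ.sat_iff hψ ha

namespace EquivP

variable {P : Set ℕ} {M M' : Model}

lemma symm {a : M.W} {a' : M'.W} (h : EquivP P M a M' a') : EquivP P M' a' M a :=
  fun ψ hψ => (h ψ hψ).symm

lemma exists_distinguishing {a : M.W} {a' : M'.W} (h : ¬ EquivP P M a M' a') :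
    ∃ χ : Form, ↑χ.vars ⊆ P ∧ M.sat a χ ∧ ¬ M'.sat a' χ := by
  simp only [EquivP, not_forall, exists_prop] at h
  obtain ⟨ψ, hψ, hne⟩ := h
  by_cases ha : M.sat a ψ
  · exact ⟨ψ, hψ, ha, fun ha' => hne (iff_of_true ha ha')⟩
  · exact ⟨ψ.neg, by simpa using hψ, by simpa using ha,
      by simpa using fun ha' => hne (iff_of_false ha ha')⟩

lemma exists_rel {s t : M.W} {s' : M'.W} (h : EquivP P M s M' s') (hst : M.R s t) :
    ∃ t', M'.R s' t' ∧ EquivP P M t M' t' := by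
  by_contra! hne
  -- `⊤` stands in for the non-successors of `s'`, so that `χ` is a total function on `M'.W`
  have hdist (t' : M'.W) :
      ∃ χ : Form, ↑χ.vars ⊆ P ∧ M.sat t χ ∧ (M'.R s' t' → ¬ M'.sat t' χ) := by
    by_cases ht' : M'.R s' t'
    · obtain ⟨χ, hχ, htχ, ht'χ⟩ := exists_distinguishing (hne t' ht')
      exact ⟨χ, hχ, htχ, fun _ => ht'χ⟩
    · exact ⟨.top, by simp [Form.vars], trivial, fun h => absurd h ht'⟩
  choose χ hχP hχt hχt' using hdist
  have : Fintype M'.W := @Fintype.ofFinite _ M'.finite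
  let S := Finset.univ.image χ
  have hS : M.sat s (.dia (bigAnd S)) :=
    ⟨t, hst, (M.sat_bigAnd S t).2 (by simpa [S] using hχt)⟩
  have hSP : ↑(Form.dia (bigAnd S)).vars ⊆ P :=
    vars_bigAnd_subset (by simpa [S] using hχP)
  obtain ⟨t', ht', hS'⟩ := (h _ hSP).1 hS
  exact hχt' t' ht' ((M'.sat_bigAnd S t').1 hS' _ (by simp [S]))

lemma bisimilar {a : M.W} {a' : M'.W} (h : EquivP P M a M' a') : Bisimilar P M a M' a' := by
  refine ⟨fun s s' => EquivP P M s M' s', ⟨⟨a, a', h⟩, fun s s' hs => ⟨?_, ?_, ?_⟩⟩, h⟩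
  · ext p
    simp only [Set.mem_inter_iff, and_congr_left_iff]
    exact fun hp => hs (.pos p) (by simpa [Form.vars] using hp)
  · exact fun t ht => hs.exists_rel ht
  · intro t' ht'
    obtain ⟨t, ht, hequiv⟩ := hs.symm.exists_rel ht'
    exact ⟨t, ht, hequiv.symm⟩

end EquivP

lemma Complete.equivP {l : Logic} {φ : Form} (hφ : Complete l φ) {M M' : Model}
    (hM : M.IsFor l) (hM' : M'.IsFor l) {a : M.W} {a' : M'.W} (ha : M.sat a φ)
    (ha' : M'.sat a' φ) : EquivP φ.vars M a M' a' := by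
  intro ψ hψ
  rcases hφ ψ (Finset.coe_subset.1 hψ) with h | h
  · exact iff_of_true (h.mp hM ha) (h.mp hM' ha')
  · exact iff_of_false (by simpa using h.mp hM ha) (by simpa using h.mp hM' ha')

lemma complete_of_forall_bisimilar {l : Logic} {φ : Form}
    (h : ∀ (M M' : Model) (a : M.W) (a' : M'.W), M.IsFor l → M'.IsFor l → M.sat a φ →
      M'.sat a' φ → Bisimilar ↑φ.vars M a M' a') :
    Complete l φ := by
  intro ψ hψ
  by_contra! hnot
  simp only [Valid, not_forall, Model.sat_imp, Model.sat_neg, not_not, exists_prop] at hnot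
  obtain ⟨⟨M, hM, a, ha, haψ⟩, ⟨M', hM', a', ha', ha'ψ⟩⟩ := hnot
  exact haψ (((h M M' a a' hM hM' ha ha').equivP ψ (Finset.coe_subset.2 hψ)).2 ha'ψ)

/-- φ is complete for l iff any two pointed models of φ for l
are bisimilar modulo P(φ). -/
theorem stmt1 (l : Logic) (φ : Form) :
    Complete l φ ↔
      ∀ (M M' : Model) (a : M.W) (a' : M'.W),
        M.IsFor l → M'.IsFor l → M.sat a φ → M'.sat a' φ →
        Bisimilar ↑φ.vars M a M' a' :=
  ⟨fun hφ _ _ _ _ hM hM' ha ha' => (hφ.equivP hM hM' ha ha').bisimilar,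
    complete_of_forall_bisimilar⟩
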